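/- Let G be a torsion-free abelian group of finite torsion-free rank and φ : G → G an endomorphism. Let ker_∞φ = ⋃_{n≥1} ker φ^n be the hyperkernel of φ and φ̄ : G/ker_∞φ → G/ker_∞φ the induced endomorphism. Then h(φ) = h(φ̄), and the Addition Theorem AT_h(G, φ, ker_∞φ) holds, i.e. h(φ) = h(φ↾_{ker_∞φ}) + h(φ̄). -/

import Mathlib

open Pointwise

/-- The `n`-th φ-trajectory `T_n(φ,F) = F + φ(F) + ⋯ + φ^{n-1}(F)` of a finite subset `F`. -/
noncomputable def traj {G : Type*} [AddCommGroup G] (φ : AddMonoid.End G) (F : Finset G)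
    (n : ℕ) : Finset G :=
  letI := Classical.decEq G
  ∑ k ∈ Finset.range n, F.image (φ ^ k)

/-- The algebraic entropy of `φ` with respect to `F`:
`H(φ,F) = lim_n log|T_n(φ,F)|/n = inf_{n ≥ 1} log|T_n(φ,F)|/n`. -/
noncomputable def entWith {G : Type*} [AddCommGroup G] (φ : AddMonoid.End G) (F : Finset G) : ℝ :=
  ⨅ n : ℕ, Real.log ((traj φ F (n + 1)).card) / (n + 1)

/-- The algebraic entropy `h(φ) = sup { H(φ,F) : F nonempty finite }`, valued in `[0,∞]`. -/
noncomputable def algEnt {G : Type*} [AddCommGroup G] (φ : AddMonoid.End G) : ENNReal :=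
  ⨆ (F : Finset G) (_ : F.Nonempty), ENNReal.ofReal (entWith φ F)

/-- Restriction of an endomorphism to an invariant subgroup. -/
def restrictEnd {G : Type*} [AddCommGroup G] (φ : AddMonoid.End G) (H : AddSubgroup G)
    (h : ∀ x ∈ H, φ x ∈ H) : AddMonoid.End H :=
  AddMonoidHom.codRestrict ((φ : G →+ G).comp H.subtype) H (fun x => h x x.2)

/-- The endomorphism induced on the quotient by an invariant subgroup. -/
def quotEnd {G : Type*} [AddCommGroup G] (φ : AddMonoid.End G) (H : AddSubgroup G)
    (h : ∀ x ∈ H, φ x ∈ H) : AddMonoid.End (G ⧸ H) :=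
  QuotientAddGroup.map H H (φ : G →+ G) h
/-- The hyperkernel `ker_∞φ = ⋃_{n ≥ 1} ker φ^n`. -/
def hyperKer {G : Type*} [AddCommGroup G] (φ : AddMonoid.End G) : AddSubgroup G where
  carrier := {x | ∃ n : ℕ, 0 < n ∧ (φ ^ n) x = 0}
  zero_mem' := ⟨1, Nat.one_pos, by simp⟩
  add_mem' := by
    rintro a b ⟨n, hn, ha⟩ ⟨m, hm, hb⟩
    refine ⟨n + m, by omega, ?_⟩
    have h1 : (φ ^ (n + m)) a = 0 := by
      have hpow : φ ^ (n + m) = φ ^ m * φ ^ n := by rw [← pow_add, Nat.add_comm]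
      calc (φ ^ (n + m)) a = (φ ^ m) ((φ ^ n) a) := by rw [hpow]; rfl
        _ = 0 := by rw [ha]; simp
    have h2 : (φ ^ (n + m)) b = 0 := by
      have hpow : φ ^ (n + m) = φ ^ n * φ ^ m := by rw [← pow_add]
      calc (φ ^ (n + m)) b = (φ ^ n) ((φ ^ m) b) := by rw [hpow]; rfl
        _ = 0 := by rw [hb]; simp
    rw [map_add, h1, h2, add_zero]
  neg_mem' := by
    rintro a ⟨n, hn, ha⟩
    exact ⟨n, hn, by rw [map_neg, ha, neg_zero]⟩

theorem hyperKer_inv {G : Type*} [AddCommGroup G] (φ : AddMonoid.End G) :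
    ∀ x ∈ hyperKer φ, φ x ∈ hyperKer φ := by
  rintro x ⟨n, hn, hx⟩
  refine ⟨n, hn, ?_⟩
  have key : (φ ^ n) (φ x) = φ ((φ ^ n) x) := by
    have h1 : φ ^ n * φ = φ * φ ^ n := by rw [← pow_succ, ← pow_succ']
    show (φ ^ n * φ) x = (φ * φ ^ n) x
    rw [h1]
  rw [key, hx, map_zero]

section Aux
variable {G : Type*} [AddCommGroup G] {G' : Type*} [AddCommGroup G']

lemma decEq_irrel {α : Type*} (i1 i2 : DecidableEq α) : i1 = i2 := by
  funext a b
  exact Subsingleton.elim _ _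

lemma finset_image_irrel {α β : Type*} (i1 i2 : DecidableEq β) (f : α → β) (s : Finset α) :
    @Finset.image _ _ i1 f s = @Finset.image _ _ i2 f s := by
  rw [decEq_irrel i1 i2]

lemma finset_add_irrel {α : Type*} [AddCommGroup α] (i1 i2 : DecidableEq α) (s t : Finset α) :
    @HAdd.hAdd _ _ _ (@instHAdd _ (@Finset.add _ i1 _)) s t
      = @HAdd.hAdd _ _ _ (@instHAdd _ (@Finset.add _ i2 _)) s t := by
  rw [decEq_irrel i1 i2]

lemma traj_zero (φ : AddMonoid.End G) (F : Finset G) : traj φ F 0 = {0} := by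
  classical
  simp [traj]
  rfl

lemma traj_succ' (φ : AddMonoid.End G) (F : Finset G) (n : ℕ) :
    traj φ F (n + 1) = letI := Classical.decEq G; traj φ F n + F.image (φ ^ n) := by
  classical
  simp only [traj, Finset.sum_range_succ]

lemma traj_succ [inst : DecidableEq G] (φ : AddMonoid.End G) (F : Finset G) (n : ℕ) :
    traj φ F (n + 1) = traj φ F n + F.image (φ ^ n) := by
  rw [traj_succ' φ F n, finset_image_irrel (Classical.decEq G) inst,
    finset_add_irrel (Classical.decEq G) inst]

lemma traj_nonempty (φ : AddMonoid.End G) {F : Finset G} (hF : F.Nonempty) (n : ℕ) :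
    (traj φ F n).Nonempty := by
  classical
  induction n with
  | zero => rw [traj_zero]; exact ⟨0, Finset.mem_singleton_self 0⟩
  | succ n ih => rw [traj_succ]; exact ih.add (hF.image _)

lemma traj_card_pos (φ : AddMonoid.End G) {F : Finset G} (hF : F.Nonempty) (n : ℕ) :
    0 < (traj φ F n).card :=
  Finset.card_pos.mpr (traj_nonempty φ hF n)

lemma log_nat_nonneg (n : ℕ) : 0 ≤ Real.log n := by
  cases n with
  | zero => simp
  | succ n => exact Real.log_nonneg (by exact_mod_cast Nat.succ_le_succ (Nat.zero_le n))

lemma log_nat_mono {a b : ℕ} (h : a ≤ b) : Real.log a ≤ Real.log b := by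
  cases Nat.eq_zero_or_pos a with
  | inl h0 => rw [h0]; simpa using log_nat_nonneg b
  | inr h0 => exact Real.log_le_log (by exact_mod_cast h0) (by exact_mod_cast h)

lemma entWith_bddBelow (φ : AddMonoid.End G) (F : Finset G) :
    BddBelow (Set.range fun n : ℕ => Real.log ((traj φ F (n + 1)).card) / (n + 1)) := by
  refine ⟨0, ?_⟩
  rintro x ⟨n, rfl⟩
  exact div_nonneg (log_nat_nonneg _) (by positivity)

lemma entWith_le (φ : AddMonoid.End G) (F : Finset G) (n : ℕ) :
    entWith φ F ≤ Real.log ((traj φ F (n + 1)).card) / (n + 1) :=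
  ciInf_le (entWith_bddBelow φ F) n

lemma entWith_nonneg (φ : AddMonoid.End G) (F : Finset G) : 0 ≤ entWith φ F :=
  Real.iInf_nonneg fun n => div_nonneg (log_nat_nonneg _) (by positivity)

lemma entWith_mono (φ : AddMonoid.End G) (ψ : AddMonoid.End G') (F : Finset G) (E : Finset G')
    (h : ∀ n, (traj φ F (n + 1)).card ≤ (traj ψ E (n + 1)).card) :
    entWith φ F ≤ entWith ψ E :=
  le_ciInf fun m => (entWith_le φ F m).trans
    (div_le_div_of_nonneg_right (log_nat_mono (h m)) (by positivity) |>.trans_eq rfl)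

lemma entWith_le_zero_of_bounded (φ : AddMonoid.End G) (F : Finset G) (B : ℕ)
    (h : ∀ n : ℕ, (traj φ F (n + 1)).card ≤ B) : entWith φ F ≤ 0 := by
  have htend : Filter.Tendsto (fun n : ℕ => Real.log B / (n + 1)) Filter.atTop (nhds 0) := by
    have h1 := Filter.Tendsto.comp (tendsto_const_div_atTop_nhds_zero_nat (Real.log B))
      (Filter.tendsto_add_atTop_nat 1)
    have h2 : ((fun n : ℕ => Real.log B / n) ∘ fun a => a + 1)
        = fun n : ℕ => Real.log B / (n + 1) := by
      funext n
      simp [Function.comp]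
    rwa [h2] at h1
  refine ge_of_tendsto' htend fun n => ?_
  exact (entWith_le φ F n).trans
    (div_le_div_of_nonneg_right (log_nat_mono (h n)) (by positivity))
lemma traj_add' (φ : AddMonoid.End G) (F : Finset G) (a b : ℕ) :
    traj φ F (a + b) = letI := Classical.decEq G
      traj φ F a + (traj φ F b).image (φ ^ a) := by
  classical
  have himg : ∀ n : ℕ, (traj φ F n).image (φ ^ a)
      = ∑ k ∈ Finset.range n, F.image (φ ^ (a + k)) := by
    intro n
    induction n with
    | zero => simp [traj]; rfl
    | succ n ih =>
        simp only [traj, Finset.sum_range_succ] at *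
        rw [Finset.image_add, ih, Finset.image_image]
        congr 1
        rw [pow_add]
        rfl
  calc traj φ F (a + b)
      = (∑ k ∈ Finset.range a, F.image (φ ^ k))
        + ∑ k ∈ Finset.range b, F.image (φ ^ (a + k)) := by
        simp only [traj, Finset.sum_range_add]
    _ = _ := by
        rw [himg b]
        rfl

lemma traj_add [inst : DecidableEq G] (φ : AddMonoid.End G) (F : Finset G) (a b : ℕ) :
    traj φ F (a + b) = traj φ F a + (traj φ F b).image (φ ^ a) := by
  rw [traj_add' φ F a b, finset_image_irrel (Classical.decEq G) inst,
    finset_add_irrel (Classical.decEq G) inst]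

lemma card_traj_add_le (φ : AddMonoid.End G) (F : Finset G) (a b : ℕ) :
    (traj φ F (a + b)).card ≤ (traj φ F a).card * (traj φ F b).card := by
  classical
  rw [traj_add]
  refine le_trans Finset.card_add_le ?_
  exact Nat.mul_le_mul_left _ Finset.card_image_le

lemma card_traj_pow_le (φ : AddMonoid.End G) (F : Finset G) (m k : ℕ) :
    (traj φ F (k * m)).card ≤ (traj φ F m).card ^ k := by
  classical
  induction k with
  | zero => simp [traj_zero]
  | succ k ih =>
      have h : (k + 1) * m = k * m + m := by ring
      rw [h, pow_succ]
      exact (card_traj_add_le φ F (k * m) m).trans (by gcongr)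

lemma image_traj' (φ : AddMonoid.End G) (ψ : AddMonoid.End G') (f : G →+ G')
    (hf : ∀ x, f (φ x) = ψ (f x)) (F : Finset G) (n : ℕ) :
    letI := Classical.decEq G'
    (traj φ F n).image f = traj ψ (F.image f) n := by
  classical
  have hpow : ∀ (k : ℕ) (x : G), f ((φ ^ k) x) = (ψ ^ k) (f x) := by
    intro k
    induction k with
    | zero => simp
    | succ k ih =>
      intro x
      rw [pow_succ, pow_succ]
      show f ((φ ^ k) (φ x)) = (ψ ^ k) (ψ (f x))
      rw [ih, hf]
  induction n with
  | zero =>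
      rw [traj_zero, traj_zero]
      simp
  | succ n ih =>
      rw [traj_succ, traj_succ, Finset.image_add, ih, Finset.image_image, Finset.image_image]
      congr 1
      apply Finset.image_congr
      intro x _
      exact hpow n x

lemma image_traj {G' : Type*} [AddCommGroup G'] [inst : DecidableEq G']
    (φ : AddMonoid.End G) (ψ : AddMonoid.End G') (f : G →+ G')
    (hf : ∀ x, f (φ x) = ψ (f x)) (F : Finset G) (n : ℕ) :
    (traj φ F n).image f = traj ψ (F.image f) n := by
  rw [finset_image_irrel inst (Classical.decEq G') (⇑f) (traj φ F n),
    finset_image_irrel inst (Classical.decEq G') (⇑f) F]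
  exact image_traj' φ ψ f hf F n


lemma card_traj_le_card_pow (φ : AddMonoid.End G) (F : Finset G) (n : ℕ) :
    (traj φ F n).card ≤ F.card ^ n := by
  classical
  induction n with
  | zero => simp [traj_zero]
  | succ n ih =>
      rw [traj_succ]
      refine le_trans Finset.card_add_le ?_
      rw [pow_succ]
      exact Nat.mul_le_mul ih Finset.card_image_le

lemma traj_stable (φ : AddMonoid.End G) {F : Finset G} (hF : F.Nonempty) {N : ℕ}
    (hnil : ∀ x ∈ F, (φ ^ N) x = 0) :
    ∀ n, N ≤ n → traj φ F n = traj φ F N := by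
  classical
  have himg : ∀ n, N ≤ n → F.image (φ ^ n) = {0} := by
    intro n hn
    refine Finset.eq_singleton_iff_nonempty_unique_mem.mpr ⟨hF.image _, ?_⟩
    intro y hy
    rcases Finset.mem_image.mp hy with ⟨x, hx, rfl⟩
    have : φ ^ n = φ ^ (n - N) * φ ^ N := by rw [← pow_add]; congr 1; omega
    rw [this]
    show (φ ^ (n - N)) ((φ ^ N) x) = 0
    rw [hnil x hx, map_zero]
  intro n
  induction n with
  | zero => intro h; have : N = 0 := by omega
            rw [this]
  | succ n ih =>
      intro hn
      rcases Nat.lt_or_ge N (n + 1) with h | h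
      · have hNn : N ≤ n := by omega
        rw [traj_succ, himg (n := n) hNn, ← ih hNn]
        show traj φ F n + (0 : Finset G) = traj φ F n
        rw [add_zero]
      · have : N = n + 1 := by omega
        rw [this]

lemma card_traj_le_of_nilpotent (φ : AddMonoid.End G) {F : Finset G} (hF : F.Nonempty) {N : ℕ}
    (hnil : ∀ x ∈ F, (φ ^ N) x = 0) (n : ℕ) :
    (traj φ F n).card ≤ F.card ^ N := by
  rcases le_or_gt n N with h | h
  · exact (card_traj_le_card_pow φ F n).trans
      (Nat.pow_le_pow_right (Finset.card_pos.mpr hF) h)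
  · rw [traj_stable φ hF hnil n h.le]
    exact card_traj_le_card_pow φ F N

lemma entWith_le_of_card_le_mul (φ : AddMonoid.End G) (ψ : AddMonoid.End G')
    (F : Finset G) (E : Finset G') (hF : F.Nonempty) (hE : E.Nonempty) (C : ℕ) (hC : 1 ≤ C)
    (h : ∀ n, (traj φ F n).card ≤ C * (traj ψ E n).card) :
    entWith φ F ≤ entWith ψ E := by
  refine le_ciInf fun m => ?_
  set b : ℕ := (traj ψ E (m + 1)).card with hb
  have hb1 : 1 ≤ b := traj_card_pos ψ hE (m + 1)
  set L : ℝ := Real.log b / (m + 1) with hL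
  have key : ∀ k : ℕ, entWith φ F ≤ Real.log C / ((k + 1) * (m + 1) : ℝ) + L := by
    intro k
    have hidx : (k + 1) * (m + 1) = (k * m + k + m) + 1 := by ring
    have h1 := entWith_le φ F (k * m + k + m)
    have ha : (traj φ F ((k + 1) * (m + 1))).card ≤ C * b ^ (k + 1) := by
      refine (h _).trans ?_
      exact Nat.mul_le_mul_left _ (card_traj_pow_le ψ E (m + 1) (k + 1))
    have halog : Real.log ((traj φ F ((k + 1) * (m + 1))).card)
        ≤ Real.log C + (k + 1) * Real.log b := by
      refine (log_nat_mono ha).trans ?_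
      have hcast : ((C * b ^ (k + 1) : ℕ) : ℝ) = (C : ℝ) * (b : ℝ) ^ (k + 1) := by push_cast; ring
      rw [hcast, Real.log_mul (by positivity) (by positivity), Real.log_pow]
      push_cast
      ring_nf
      exact le_refl _
    have hD : (0 : ℝ) < ((k + 1) * (m + 1) : ℝ) := by positivity
    have h2 : entWith φ F
        ≤ (Real.log C + (k + 1) * Real.log b) / ((k + 1) * (m + 1) : ℝ) := by
      refine h1.trans ?_
      have hden : ((k * m + k + m : ℕ) : ℝ) + 1 = ((k + 1) * (m + 1) : ℝ) := by push_cast; ring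
      rw [hidx] at halog
      rw [hden]
      exact div_le_div_of_nonneg_right halog hD.le |>.trans_eq rfl
    refine h2.trans_eq ?_
    rw [add_div]
    congr 1
    rw [hL]
    have hk : ((k : ℝ) + 1) ≠ 0 := by positivity
    field_simp
  have htend : Filter.Tendsto (fun k : ℕ => Real.log C / ((k + 1) * (m + 1) : ℝ) + L)
      Filter.atTop (nhds L) := by
    have h0 : Filter.Tendsto (fun k : ℕ => Real.log C / ((k + 1) * (m + 1) : ℝ))
        Filter.atTop (nhds 0) := by
      have h1 : Filter.Tendsto (fun k : ℕ => ((k + 1) * (m + 1) : ℝ)) Filter.atTop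
          Filter.atTop := by
        apply Filter.Tendsto.atTop_mul_const (by positivity : (0:ℝ) < (m+1 : ℝ))
        exact Filter.tendsto_atTop_add_const_right _ 1 tendsto_natCast_atTop_atTop
      exact Filter.Tendsto.div_atTop tendsto_const_nhds h1
    simpa using h0.add tendsto_const_nhds
  exact ge_of_tendsto' htend key


end Aux

universe u

/-- Auxiliary data: an embedding of `G` into a vector-space-like group `V` with a Fitting
projection for the extended endomorphism. -/
structure FitPack (G : Type u) [AddCommGroup G] (φ : AddMonoid.End G) where
  V : Type u
  [instV : AddCommGroup V]
  Ψ : AddMonoid.End V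
  emb : G →+ V
  P : V →+ V
  N : ℕ
  N_pos : 0 < N
  emb_inj : Function.Injective emb
  emb_comm : ∀ x, emb (φ x) = Ψ (emb x)
  P_comm : ∀ v, P (Ψ v) = Ψ (P v)
  P_nil : ∀ v, (Ψ ^ N) (P v) = 0
  P_fix : ∀ (v) (m : ℕ), (Ψ ^ m) v = 0 → P v = v

attribute [instance] FitPack.instV

theorem fitPack_nonempty {G : Type u} [AddCommGroup G] (φ : AddMonoid.End G)
    (htf : ∀ x : G, x ≠ 0 → ∀ n : ℕ, 0 < n → n • x ≠ 0)
    (hrk : Module.rank ℤ G < Cardinal.aleph0) : Nonempty (FitPack G φ) := by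
  letI : Module ℤ (LocalizedModule (nonZeroDivisors ℤ) G) := OreLocalization.instModuleOfIsScalarTower
  have hιinj : ∀ x : G, LocalizedModule.mkLinearMap (nonZeroDivisors ℤ) G x = 0 → x = 0 := by
    intro x hx
    have hx' : LocalizedModule.mk (S := nonZeroDivisors ℤ) x 1 = LocalizedModule.mk 0 1 := by
      rw [LocalizedModule.zero_mk]
      exact hx
    rcases LocalizedModule.mk_eq.mp hx' with ⟨u, hu⟩
    simp only [one_smul, smul_zero] at hu
    have hs' : (u : ℤ) • x = 0 := by
      rw [← Submonoid.smul_def]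
      exact hu
    by_contra hx0
    have hsne : (u : ℤ) ≠ 0 := nonZeroDivisors.coe_ne_zero u
    refine htf x hx0 (u : ℤ).natAbs (Int.natAbs_pos.mpr hsne) ?_
    rcases Int.natAbs_eq (u : ℤ) with h | h
    · rw [← natCast_zsmul, ← h, hs']
    · rw [← natCast_zsmul, ← neg_neg ((u : ℤ).natAbs : ℤ), ← h, neg_smul, hs', neg_zero]
  set ψ : LocalizedModule (nonZeroDivisors ℤ) G →ₗ[FractionRing ℤ]
      LocalizedModule (nonZeroDivisors ℤ) G :=
    LocalizedModule.map (nonZeroDivisors ℤ) (AddMonoidHom.toIntLinearMap (φ : G →+ G)) with hψdef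
  have hψι : ∀ x : G, ψ (LocalizedModule.mkLinearMap (nonZeroDivisors ℤ) G x)
      = LocalizedModule.mkLinearMap (nonZeroDivisors ℤ) G (φ x) := by
    intro x
    rw [hψdef]
    show LocalizedModule.map (nonZeroDivisors ℤ) (AddMonoidHom.toIntLinearMap (φ : G →+ G))
      (LocalizedModule.mk x 1) = LocalizedModule.mk (φ x) 1
    rw [LocalizedModule.map_mk]
    rfl
  have hrank : Module.rank (FractionRing ℤ) (LocalizedModule (nonZeroDivisors ℤ) G)
      = Module.rank ℤ G :=
    (IsLocalization.rank_eq (FractionRing ℤ) (nonZeroDivisors ℤ) le_rfl).trans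
      (IsLocalizedModule.rank_eq (p := nonZeroDivisors ℤ) (hp := le_rfl)
        (f := LocalizedModule.mkLinearMap (nonZeroDivisors ℤ) G))
  haveI : FiniteDimensional (FractionRing ℤ) (LocalizedModule (nonZeroDivisors ℤ) G) := by
    rw [FiniteDimensional, ← Module.rank_lt_aleph0_iff, hrank]
    exact hrk
  obtain ⟨N, ⟨hcompl, hsup⟩, hN1⟩ :=
    ((ψ.eventually_isCompl_ker_pow_range_pow.and ψ.eventually_iSup_ker_pow_eq).and
      (Filter.eventually_ge_atTop 1)).exists
  have hker : ∀ m : ℕ, LinearMap.ker (ψ ^ m) ≤ LinearMap.ker (ψ ^ N) := by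
    intro m
    rw [← hsup]
    exact le_iSup (fun m => LinearMap.ker (ψ ^ m)) m
  set W := LinearMap.ker (ψ ^ N) with hW
  set U := LinearMap.range (ψ ^ N) with hU
  set Pl := Submodule.linearProjOfIsCompl W U hcompl with hPl
  set P : LocalizedModule (nonZeroDivisors ℤ) G →ₗ[FractionRing ℤ]
      LocalizedModule (nonZeroDivisors ℤ) G := W.subtype ∘ₗ Pl with hP
  have hPmem : ∀ v, P v ∈ W := fun v => (Pl v).2
  have hPW : ∀ v ∈ W, P v = v := by
    intro v hv
    rw [hP]
    show (Pl v : LocalizedModule (nonZeroDivisors ℤ) G) = v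
    have : Pl v = ⟨v, hv⟩ := Submodule.linearProjOfIsCompl_apply_left hcompl ⟨v, hv⟩
    rw [this]
  have hPU : ∀ v ∈ U, P v = 0 := by
    intro v hv
    rw [hP]
    show (Pl v : LocalizedModule (nonZeroDivisors ℤ) G) = 0
    have : Pl v = 0 := Submodule.linearProjOfIsCompl_apply_right' hcompl hv
    rw [this]
    rfl
  have hWinv : ∀ v ∈ W, ψ v ∈ W := by
    intro v hv
    rw [hW, LinearMap.mem_ker] at *
    have : (ψ ^ N) (ψ v) = ψ ((ψ ^ N) v) := by
      show (ψ ^ N * ψ) v = (ψ * ψ ^ N) v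
      rw [← pow_succ, ← pow_succ']
    rw [this, hv, map_zero]
  have hUinv : ∀ v ∈ U, ψ v ∈ U := by
    intro v hv
    rw [hU, LinearMap.mem_range] at *
    rcases hv with ⟨t, rfl⟩
    exact ⟨ψ t, by show (ψ ^ N * ψ) t = (ψ * ψ ^ N) t; rw [← pow_succ, ← pow_succ']⟩
  have hPψ : ∀ v, P (ψ v) = ψ (P v) := by
    intro v
    obtain ⟨w, u, hw, hu, rfl⟩ := Submodule.codisjoint_iff_exists_add_eq.mp hcompl.codisjoint v
    rw [map_add ψ, map_add P, map_add P, hPW w hw, hPU u hu, add_zero,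
      hPW _ (hWinv w hw), hPU _ (hUinv u hu), add_zero]
  -- now build the AddMonoid.End versions
  set Ψe : AddMonoid.End (LocalizedModule (nonZeroDivisors ℤ) G) := ψ.toAddMonoidHom with hΨe
  have hΨpow : ∀ (k : ℕ) (v : LocalizedModule (nonZeroDivisors ℤ) G),
      (Ψe ^ k) v = (ψ ^ k) v := by
    intro k
    induction k with
    | zero => intro v; rfl
    | succ k ih =>
        intro v
        rw [pow_succ, pow_succ]
        show (Ψe ^ k) (Ψe v) = (ψ ^ k) (ψ v)
        exact ih (ψ v)
  refine ⟨LocalizedModule (nonZeroDivisors ℤ) G, Ψe,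
    (LocalizedModule.mkLinearMap (nonZeroDivisors ℤ) G).toAddMonoidHom, P.toAddMonoidHom,
    N, hN1, ?_, ?_, ?_, ?_, ?_⟩
  · intro x y hxy
    have h0 : LocalizedModule.mkLinearMap (nonZeroDivisors ℤ) G (x - y) = 0 := by
      rw [map_sub, sub_eq_zero]
      exact hxy
    exact sub_eq_zero.mp (hιinj _ h0)
  · exact fun x => (hψι x).symm
  · exact hPψ
  · intro v
    rw [hΨpow]
    exact LinearMap.mem_ker.mp (hker N (hPmem v))
  · intro v m h
    rw [hΨpow] at h
    exact hPW v (hker m (LinearMap.mem_ker.mpr h))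

section Glue
variable {G : Type u} [AddCommGroup G]

lemma hom_pow_comm {G' : Type*} [AddCommGroup G'] (φ : AddMonoid.End G) (ψ : AddMonoid.End G')
    (f : G →+ G') (hf : ∀ x, f (φ x) = ψ (f x)) :
    ∀ (k : ℕ) (x : G), f ((φ ^ k) x) = (ψ ^ k) (f x) := by
  intro k
  induction k with
  | zero => intro x; rfl
  | succ k ih =>
      intro x
      rw [pow_succ, pow_succ]
      show f ((φ ^ k) (φ x)) = (ψ ^ k) (ψ (f x))
      rw [← hf, ih]

/-- The restriction of an endomorphism to its hyperkernel has zero algebraic entropy. -/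
lemma algEnt_restrict_hyperKer (φ : AddMonoid.End G) :
    algEnt (restrictEnd φ (hyperKer φ) (hyperKer_inv φ)) = 0 := by
  classical
  set K := hyperKer φ with hK
  set ρ := restrictEnd φ K (hyperKer_inv φ) with hρ
  refine le_antisymm ?_ zero_le
  refine iSup_le fun F => iSup_le fun hF => ?_
  rw [← ENNReal.ofReal_zero]
  refine ENNReal.ofReal_le_ofReal ?_
  -- powers of the restriction compute via φ
  have hρpow : ∀ (k : ℕ) (x : K), (((ρ ^ k) x : K) : G) = (φ ^ k) (x : G) := by
    intro k
    induction k with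
    | zero => intro x; rfl
    | succ k ih =>
        intro x
        rw [pow_succ, pow_succ]
        show (((ρ ^ k) (ρ x) : K) : G) = (φ ^ k) (φ (x : G))
        rw [ih (ρ x)]
        rfl
  -- common nilpotency index for the finite set F
  have hex : ∀ x : K, ∃ n : ℕ, (φ ^ n) (x : G) = 0 := by
    intro x
    obtain ⟨n, _, hn⟩ := x.2
    exact ⟨n, hn⟩
  set g : K → ℕ := fun x => Nat.find (hex x) with hg
  set N : ℕ := F.sup g with hNdef
  have hnil : ∀ x ∈ F, (ρ ^ N) x = 0 := by
    intro x hx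
    have h1 : (φ ^ g x) (x : G) = 0 := Nat.find_spec (hex x)
    have h2 : g x ≤ N := Finset.le_sup hx
    have h3 : (φ ^ N) (x : G) = 0 := by
      have : φ ^ N = φ ^ (N - g x) * φ ^ g x := by rw [← pow_add]; congr 1; omega
      rw [this]
      show (φ ^ (N - g x)) ((φ ^ g x) (x : G)) = 0
      rw [h1, map_zero]
    have : (((ρ ^ N) x : K) : G) = 0 := by rw [hρpow]; exact h3
    exact Subtype.ext this
  exact entWith_le_zero_of_bounded ρ F (F.card ^ N)
    (fun n => card_traj_le_of_nilpotent ρ hF hnil (n + 1))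

/-- Easy half: the entropy of the induced map on the quotient is at most that of `φ`. -/
lemma algEnt_quot_le (φ : AddMonoid.End G) :
    algEnt (quotEnd φ (hyperKer φ) (hyperKer_inv φ)) ≤ algEnt φ := by
  letI := Classical.decEq G
  letI := Classical.decEq (G ⧸ hyperKer φ)
  set K := hyperKer φ with hK
  set φb := quotEnd φ K (hyperKer_inv φ) with hφb
  set π : G →+ G ⧸ K := QuotientAddGroup.mk' K with hπ
  have hcomm : ∀ x : G, π (φ x) = φb (π x) := by
    intro x
    show ((φ x : G) : G ⧸ K) = φb ((x : G) : G ⧸ K)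
    rw [hφb]
    exact (QuotientAddGroup.map_mk K K (φ : G →+ G) (hyperKer_inv φ) x).symm
  refine iSup_le fun F' => iSup_le fun hF' => ?_
  set F : Finset G := F'.image (fun q => Quotient.out q) with hFdef
  have hFne : F.Nonempty := hF'.image _
  have himg : F.image π = F' := by
    rw [hFdef, Finset.image_image]
    have : ∀ q ∈ F', (π ∘ fun q => Quotient.out q) q = q := by
      intro q _
      show π (Quotient.out q) = q
      exact QuotientAddGroup.out_eq' q
    rw [Finset.image_congr this]
    exact Finset.image_id
  have hcard : ∀ n, (traj φb F' (n + 1)).card ≤ (traj φ F (n + 1)).card := by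
    intro n
    rw [← himg, ← image_traj φ φb π hcomm F (n + 1)]
    exact Finset.card_image_le
  refine le_trans ?_ (le_iSup_of_le F (le_iSup_of_le hFne le_rfl))
  exact ENNReal.ofReal_le_ofReal (entWith_mono φb φ F' F hcard)

/-- Hard half: `h(φ) ≤ h(φ̄)` for torsion-free `G` of finite rank. -/
lemma algEnt_le_quot (φ : AddMonoid.End G)
    (htf : ∀ x : G, x ≠ 0 → ∀ n : ℕ, 0 < n → n • x ≠ 0)
    (hrk : Module.rank ℤ G < Cardinal.aleph0) :
    algEnt φ ≤ algEnt (quotEnd φ (hyperKer φ) (hyperKer_inv φ)) := by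
  letI := Classical.decEq G
  letI := Classical.decEq (G ⧸ hyperKer φ)
  obtain ⟨pk⟩ := fitPack_nonempty φ htf hrk
  letI := Classical.decEq pk.V
  set K := hyperKer φ with hK
  set φb := quotEnd φ K (hyperKer_inv φ) with hφb
  set π : G →+ G ⧸ K := QuotientAddGroup.mk' K with hπ
  have hcomm : ∀ x : G, π (φ x) = φb (π x) := by
    intro x
    show ((φ x : G) : G ⧸ K) = φb ((x : G) : G ⧸ K)
    rw [hφb]
    exact (QuotientAddGroup.map_mk K K (φ : G →+ G) (hyperKer_inv φ) x).symm
  set fP : G →+ pk.V := pk.P.comp pk.emb with hfPdef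
  set fQ : G →+ pk.V := pk.emb - pk.P.comp pk.emb with hfQdef
  have hfQapp : ∀ x : G, fQ x = pk.emb x - pk.P (pk.emb x) := fun x => rfl
  have hfP : ∀ x, fP (φ x) = pk.Ψ (fP x) := by
    intro x
    show pk.P (pk.emb (φ x)) = pk.Ψ (pk.P (pk.emb x))
    rw [pk.emb_comm, pk.P_comm]
  have hfQ : ∀ x, fQ (φ x) = pk.Ψ (fQ x) := by
    intro x
    rw [hfQapp, hfQapp, pk.emb_comm, pk.P_comm, map_sub]
  have hembpow : ∀ (k : ℕ) (x : G), pk.emb ((φ ^ k) x) = (pk.Ψ ^ k) (pk.emb x) :=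
    hom_pow_comm φ pk.Ψ pk.emb pk.emb_comm
  have hfix : ∀ x ∈ K, pk.P (pk.emb x) = pk.emb x := by
    rintro x ⟨n, hn, hx⟩
    refine pk.P_fix (pk.emb x) n ?_
    rw [← hembpow, hx, map_zero]
  have hfQK : ∀ x ∈ K, fQ x = 0 := by
    intro x hx
    rw [hfQapp, hfix x hx, sub_self]
  have hKle : K ≤ fQ.ker := fun x hx => AddMonoidHom.mem_ker.mpr (hfQK x hx)
  set j : G ⧸ K →+ pk.V := QuotientAddGroup.lift K fQ hKle with hj
  have hjmk : ∀ x : G, j (π x) = fQ x := fun x => rfl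
  have hjinj : Function.Injective j := by
    refine (injective_iff_map_eq_zero j).mpr ?_
    intro q
    refine QuotientAddGroup.induction_on q ?_
    intro x hx
    have h1 : fQ x = 0 := hx
    have h2 : pk.emb x = pk.P (pk.emb x) := by
      have := hfQapp x
      rw [h1] at this
      exact (sub_eq_zero.mp this.symm)
    have h3 : (pk.Ψ ^ pk.N) (pk.emb x) = 0 := by
      rw [h2]
      exact pk.P_nil (pk.emb x)
    have h4 : pk.emb ((φ ^ pk.N) x) = 0 := by rw [hembpow, h3]
    have h5 : (φ ^ pk.N) x = 0 := by
      apply pk.emb_inj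
      rw [h4, map_zero]
    have h6 : x ∈ K := ⟨pk.N, pk.N_pos, h5⟩
    exact (QuotientAddGroup.eq_zero_iff x).mpr h6
  have hjφ : ∀ q, j (φb q) = pk.Ψ (j q) := by
    intro q
    refine QuotientAddGroup.induction_on q ?_
    intro x
    have h1 : φb ((x : G ⧸ K)) = ((φ x : G) : G ⧸ K) := by
      rw [hφb]
      exact QuotientAddGroup.map_mk K K (φ : G →+ G) (hyperKer_inv φ) x
    rw [h1]
    show fQ (φ x) = pk.Ψ (fQ x)
    exact hfQ x
  refine iSup_le fun F => iSup_le fun hF => ?_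
  set E : Finset (G ⧸ K) := F.image π with hE
  have hEne : E.Nonempty := hF.image _
  set C : ℕ := (F.image fP).card ^ pk.N with hC
  have hC1 : 1 ≤ C := Nat.one_le_pow _ _ (Finset.card_pos.mpr (hF.image _))
  have hcount : ∀ n, (traj φ F n).card ≤ C * (traj φb E n).card := by
    intro n
    -- injection into the product of the two projected trajectories
    have step1 : (traj φ F n).card
        ≤ ((traj φ F n).image fP).card * ((traj φ F n).image fQ).card := by
      have hinj2 : ∀ a ∈ traj φ F n, ∀ b ∈ traj φ F n,
          (fun x => (fP x, fQ x)) a = (fun x => (fP x, fQ x)) b → a = b := by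
        intro a _ b _ hab
        have h1 : fP a = fP b := (Prod.mk.injEq _ _ _ _ ▸ hab).1
        have h2 : fQ a = fQ b := (Prod.mk.injEq _ _ _ _ ▸ hab).2
        apply pk.emb_inj
        have := congrArg₂ (· + ·) h1 h2
        simpa [hfQapp, hfPdef] using this
      have hmaps : ∀ a ∈ traj φ F n,
          (fP a, fQ a) ∈ ((traj φ F n).image fP) ×ˢ ((traj φ F n).image fQ) := by
        intro a ha
        rw [Finset.mem_product]
        exact ⟨Finset.mem_image_of_mem _ ha, Finset.mem_image_of_mem _ ha⟩
      have := Finset.card_le_card_of_injOn _ hmaps (fun a ha b hb h => hinj2 a ha b hb h)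
      rwa [Finset.card_product] at this
    have step2 : ((traj φ F n).image fP).card ≤ C := by
      rw [image_traj φ pk.Ψ fP hfP F n]
      refine card_traj_le_of_nilpotent pk.Ψ (hF.image _) ?_ n
      intro y hy
      rcases Finset.mem_image.mp hy with ⟨x, _, rfl⟩
      exact pk.P_nil (pk.emb x)
    have step3 : ((traj φ F n).image fQ).card = (traj φb E n).card := by
      rw [image_traj φ pk.Ψ fQ hfQ F n]
      have himgE : F.image fQ = E.image j := by
        rw [hE, Finset.image_image]
        rfl
      rw [himgE, ← image_traj φb pk.Ψ j hjφ E n]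
      exact Finset.card_image_of_injective _ hjinj
    calc (traj φ F n).card
        ≤ ((traj φ F n).image fP).card * ((traj φ F n).image fQ).card := step1
      _ ≤ C * (traj φb E n).card := by rw [step3]; exact Nat.mul_le_mul_right _ step2
  have hent : entWith φ F ≤ entWith φb E :=
    entWith_le_of_card_le_mul φ φb F E hF hEne C hC1 hcount
  refine le_trans ?_ (le_iSup_of_le E (le_iSup_of_le hEne le_rfl))
  exact ENNReal.ofReal_le_ofReal hent

end Glue

/-- For a torsion-free abelian group of finite torsion-free rank: `h(φ) = h(φ̄)` on
`G/ker_∞φ`, and the Addition Theorem holds for `(G,φ,ker_∞φ)`. -/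
theorem stmt13 {G : Type*} [AddCommGroup G] (φ : AddMonoid.End G)
    (htf : ∀ x : G, x ≠ 0 → ∀ n : ℕ, 0 < n → n • x ≠ 0)
    (hrk : Module.rank ℤ G < Cardinal.aleph0) :
    algEnt φ = algEnt (quotEnd φ (hyperKer φ) (hyperKer_inv φ)) ∧
    algEnt φ = algEnt (restrictEnd φ (hyperKer φ) (hyperKer_inv φ)) +
      algEnt (quotEnd φ (hyperKer φ) (hyperKer_inv φ)) := by
  have h1 : algEnt φ = algEnt (quotEnd φ (hyperKer φ) (hyperKer_inv φ)) :=
    le_antisymm (algEnt_le_quot φ htf hrk) (algEnt_quot_le φ)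
  refine ⟨h1, ?_⟩
  rw [algEnt_restrict_hyperKer φ, zero_add]
  exact h1
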